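/- Let n, n_T, r be positive integers, τ ≠ 0 and β ≠ 0 real numbers, and M, M₁, N, K ∈ ℝ^{n×n} with M invertible and K symmetric (K = Kᵀ). Let Y₁ ∈ ℝ^{n×r}, Y₂ ∈ ℝ^{n_T×r}, Ŷ = Y₁Y₂ᵀ. Let C ∈ ℝ^{n_T×n_T} be the lower bidiagonal matrix with ones on the diagonal and −1 on the first subdiagonal, C̃ = (1/τ)C, and define the 2n_T × 2n_T block matrices C₁ = [[C̃ᵀ, 0], [0, C̃]], I₀ = [[0, I_{n_T}], [0, 0]], D = [[0, 0], [−(1/β)I_{n_T}, 0]]. Define A₁ = M⁻¹K, A₂ = M⁻¹M₁, A₃ = M⁻¹N M⁻¹Nᵀ, F₁ = M⁻¹M₁Y₁, and F₂ ∈ ℝ^{2n_T×r} whose first n_T rows are zero and whose last n_T rows equal Y₂. Then Y, Λ ∈ ℝ^{n×n_T} satisfy the two equations M⁻¹M₁Y + M⁻¹KᵀΛ + ΛC̃ − M⁻¹M₁Ŷ = 0 and M⁻¹KY + YC̃ᵀ − (1/β)M⁻¹NM⁻¹NᵀΛ = 0 if and only if the column-concatenated matrix X = [Y, Λ] ∈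 ℝ^{n×2n_T} satisfies the generalized Sylvester equation A₁X + XC₁ + A₂XI₀ + A₃XD − F₁F₂ᵀ = 0. -/

import Mathlib

/-! Right multiplication of `X = [Y, Λ]` by the block matrices acts column-block-wise:
`X C₁ = [Y C̃ᵀ, Λ C̃]`, `X I₀ = [0, Y]`, `X D = [-(1/β) Λ, 0]` and `F₁ F₂ᵀ = [0, F₁ Y₂ᵀ]`.
Hence the Sylvester equation splits into one equation per column block; the first block is the
state equation and the second, once `Kᵀ = K`, the adjoint equation. -/

open Matrix

namespace Matrix

variable {R m n₁ n₂ : Type*}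

lemma fromCols_add [Add R] (A₁ B₁ : Matrix m n₁ R) (A₂ B₂ : Matrix m n₂ R) :
    fromCols A₁ A₂ + fromCols B₁ B₂ = fromCols (A₁ + B₁) (A₂ + B₂) := by
  ext i (j | j) <;> rfl

lemma fromCols_sub [Sub R] (A₁ B₁ : Matrix m n₁ R) (A₂ B₂ : Matrix m n₂ R) :
    fromCols A₁ A₂ - fromCols B₁ B₂ = fromCols (A₁ - B₁) (A₂ - B₂) := by
  ext i (j | j) <;> rfl

lemma fromCols_eq_zero_iff [Zero R] (A₁ : Matrix m n₁ R) (A₂ : Matrix m n₂ R) :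
    fromCols A₁ A₂ = 0 ↔ A₁ = 0 ∧ A₂ = 0 := by
  have hzero : (0 : Matrix m (n₁ ⊕ n₂) R) = fromCols 0 0 := by ext i (j | j) <;> rfl
  rw [hzero, fromCols_ext_iff]

end Matrix

section BlockSylvester

variable {R m k l : Type*} [CommRing R] [Fintype m] [Fintype k] [Fintype l] [DecidableEq k]

lemma sylvester_fromCols_eq_zero_iff (A₁ A₂ A₃ : Matrix m m R) (P Q : Matrix k k R) (c : R)
    (F : Matrix m l R) (G : Matrix k l R) (Y Λ : Matrix m k R) :
    A₁ * fromCols Y Λ + fromCols Y Λ * fromBlocks P 0 0 Q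
        + A₂ * fromCols Y Λ * (fromBlocks 0 1 0 0 : Matrix (k ⊕ k) (k ⊕ k) R)
        + A₃ * fromCols Y Λ * (fromBlocks 0 0 (-(c • 1)) 0 : Matrix (k ⊕ k) (k ⊕ k) R)
        - F * (fromRows 0 G)ᵀ = 0 ↔
      A₂ * Y + A₁ * Λ + Λ * Q - F * Gᵀ = 0 ∧ A₁ * Y + Y * P - c • (A₃ * Λ) = 0 := by
  simp only [mul_fromCols, fromCols_mul_fromBlocks, transpose_fromRows, transpose_zero,
    fromCols_add, fromCols_sub, fromCols_eq_zero_iff, Matrix.mul_zero, Matrix.mul_one,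
    Matrix.mul_neg, Matrix.mul_smul, add_zero, zero_add]
  rw [sub_zero, ← sub_eq_add_neg, add_comm (A₁ * Λ + Λ * Q), ← add_assoc, and_comm]

end BlockSylvester

theorem stmt_6_general (n nT r : ℕ)
    (β : ℝ)
    (M M1 N K : Matrix (Fin n) (Fin n) ℝ)
    (hKsym : Kᵀ = K)
    (Y₁ : Matrix (Fin n) (Fin r) ℝ) (Y₂ : Matrix (Fin nT) (Fin r) ℝ)
    (Yhat : Matrix (Fin n) (Fin nT) ℝ) (hYhat : Yhat = Y₁ * Y₂ᵀ)
    (Ct : Matrix (Fin nT) (Fin nT) ℝ)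
    (C₁ I₀ D : Matrix (Fin nT ⊕ Fin nT) (Fin nT ⊕ Fin nT) ℝ)
    (hC₁ : C₁ = fromBlocks Ctᵀ 0 0 Ct)
    (hI₀ : I₀ = fromBlocks 0 1 0 0)
    (hD : D = fromBlocks 0 0 (-((1 / β) • (1 : Matrix (Fin nT) (Fin nT) ℝ))) 0)
    (A₁ A₂ A₃ : Matrix (Fin n) (Fin n) ℝ)
    (hA₁ : A₁ = M⁻¹ * K) (hA₂ : A₂ = M⁻¹ * M1) (hA₃ : A₃ = M⁻¹ * N * M⁻¹ * Nᵀ)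
    (F₁ : Matrix (Fin n) (Fin r) ℝ) (hF₁ : F₁ = M⁻¹ * M1 * Y₁)
    (F₂ : Matrix (Fin nT ⊕ Fin nT) (Fin r) ℝ) (hF₂ : F₂ = fromRows 0 Y₂)
    (Y Λ : Matrix (Fin n) (Fin nT) ℝ)
    (X : Matrix (Fin n) (Fin nT ⊕ Fin nT) ℝ) (hX : X = fromCols Y Λ) :
    (M⁻¹ * M1 * Y + M⁻¹ * Kᵀ * Λ + Λ * Ct - M⁻¹ * M1 * Yhat = 0 ∧
      M⁻¹ * K * Y + Y * Ctᵀ - (1 / β) • (M⁻¹ * N * M⁻¹ * Nᵀ * Λ) = 0)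
    ↔
    A₁ * X + X * C₁ + A₂ * X * I₀ + A₃ * X * D - F₁ * F₂ᵀ = 0 := by
  subst hC₁ hI₀ hD hA₁ hA₂ hA₃ hF₁ hF₂ hX
  rw [sylvester_fromCols_eq_zero_iff, hKsym, hYhat]
  simp only [Matrix.mul_assoc]

/-- Reformulation of the reduced KKT system (symmetric `K`) as a single
generalized Sylvester matrix equation
`A₁X + XC₁ + A₂XI₀ + A₃XD − F₁F₂ᵀ = 0` for `X = [Y, Λ]`. -/
theorem stmt_6 (n nT r : ℕ) (hn : 0 < n) (hnT : 0 < nT) (hr : 0 < r)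
    (τ β : ℝ) (hτ : τ ≠ 0) (hβ : β ≠ 0)
    (M M1 N K : Matrix (Fin n) (Fin n) ℝ)
    (hMinv : IsUnit M.det) (hKsym : Kᵀ = K)
    (Y₁ : Matrix (Fin n) (Fin r) ℝ) (Y₂ : Matrix (Fin nT) (Fin r) ℝ)
    (Yhat : Matrix (Fin n) (Fin nT) ℝ) (hYhat : Yhat = Y₁ * Y₂ᵀ)
    (C : Matrix (Fin nT) (Fin nT) ℝ)
    (hC : ∀ t s : Fin nT, C t s =
      if t = s then 1 else if (t : ℕ) = (s : ℕ) + 1 then -1 else 0)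
    (Ct : Matrix (Fin nT) (Fin nT) ℝ) (hCt : Ct = (1 / τ) • C)
    (C₁ I₀ D : Matrix (Fin nT ⊕ Fin nT) (Fin nT ⊕ Fin nT) ℝ)
    (hC₁ : C₁ = fromBlocks Ctᵀ 0 0 Ct)
    (hI₀ : I₀ = fromBlocks 0 1 0 0)
    (hD : D = fromBlocks 0 0 (-((1 / β) • (1 : Matrix (Fin nT) (Fin nT) ℝ))) 0)
    (A₁ A₂ A₃ : Matrix (Fin n) (Fin n) ℝ)
    (hA₁ : A₁ = M⁻¹ * K) (hA₂ : A₂ = M⁻¹ * M1) (hA₃ : A₃ = M⁻¹ * N * M⁻¹ * Nᵀ)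
    (F₁ : Matrix (Fin n) (Fin r) ℝ) (hF₁ : F₁ = M⁻¹ * M1 * Y₁)
    (F₂ : Matrix (Fin nT ⊕ Fin nT) (Fin r) ℝ) (hF₂ : F₂ = fromRows 0 Y₂)
    (Y Λ : Matrix (Fin n) (Fin nT) ℝ)
    (X : Matrix (Fin n) (Fin nT ⊕ Fin nT) ℝ) (hX : X = fromCols Y Λ) :
    (M⁻¹ * M1 * Y + M⁻¹ * Kᵀ * Λ + Λ * Ct - M⁻¹ * M1 * Yhat = 0 ∧
      M⁻¹ * K * Y + Y * Ctᵀ - (1 / β) • (M⁻¹ * N * M⁻¹ * Nᵀ * Λ) = 0)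
    ↔
    A₁ * X + X * C₁ + A₂ * X * I₀ + A₃ * X * D - F₁ * F₂ᵀ = 0 :=
  stmt_6_general n nT r β M M1 N K hKsym Y₁ Y₂ Yhat hYhat Ct C₁ I₀ D hC₁ hI₀ hD A₁ A₂ A₃ hA₁ hA₂ hA₃
    F₁ hF₁ F₂ hF₂ Y Λ X hX
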